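/- arXiv:0810.3151 — 8 statements merged into one kernel-verified Lean document; each statement's English description precedes it below -/
import Mathlib

section
/- For all real numbers b, c, A with b, c ≥ 0 and π/6 ≤ A ≤ π, if a satisfies cosh a ≥ cosh b · cosh c − cos A · sinh b · sinh c, then a > b + c − 4. -/
open Real

theorem stmt_0 (a b c A : ℝ) (ha : 0 ≤ a) (hb : 0 ≤ b) (hc : 0 ≤ c)
    (hA₁ : π / 6 ≤ A) (hA₂ : A ≤ π)
    (h : Real.cosh a ≥ Real.cosh b * Real.cosh c - Real.cos A * Real.sinh b * Real.sinh c) :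
    a > b + c - 4 := by
  by_contra hcon
  push_neg at hcon
  have hk : Real.cos A ≤ Real.sqrt 3 / 2 := by
    rw [← Real.cos_pi_div_six]
    exact Real.cos_le_cos_of_nonneg_of_le_pi (by positivity) hA₂ hA₁
  have hs : 0 ≤ Real.sinh b * Real.sinh c :=
    mul_nonneg (Real.sinh_nonneg_iff.2 hb) (Real.sinh_nonneg_iff.2 hc)
  have h1 : Real.cosh a ≥ Real.cosh b * Real.cosh c
      - (Real.sqrt 3 / 2) * (Real.sinh b * Real.sinh c) := by nlinarith
  have hsqrt3 : Real.sqrt 3 < 1.75 := by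
    rw [show (1.75:ℝ) = Real.sqrt (1.75^2) from (Real.sqrt_sq (by norm_num)).symm]
    exact Real.sqrt_lt_sqrt (by norm_num) (by norm_num)
  have hadd : Real.cosh (b+c) = Real.cosh b * Real.cosh c + Real.sinh b * Real.sinh c :=
    Real.cosh_add b c
  have hsub : Real.cosh (b-c) = Real.cosh b * Real.cosh c - Real.sinh b * Real.sinh c :=
    Real.cosh_sub b c
  have h3 : (1:ℝ) ≤ Real.cosh (b-c) := Real.one_le_cosh _
  have h2 : Real.cosh a ≥ ((2 - Real.sqrt 3)/4) * Real.cosh (b+c) := by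
    nlinarith [Real.sqrt_nonneg 3]
  have hca : Real.cosh a ≤ Real.exp a := by
    rw [Real.cosh_eq]
    have := Real.exp_le_exp.2 (neg_le_self ha)
    linarith
  have hcbc : Real.exp (b+c) / 2 ≤ Real.cosh (b+c) := by
    rw [Real.cosh_eq]
    have := (Real.exp_pos (-(b+c))).le
    linarith
  have hea : Real.exp a ≤ Real.exp (b+c-4) := Real.exp_le_exp.2 hcon
  have hsplit : Real.exp (b+c-4) * Real.exp 4 = Real.exp (b+c) := by
    rw [← Real.exp_add]; ring_nf
  have he4 : (32:ℝ) < Real.exp 4 := by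
    have h1 : (2.7182818283:ℝ) < Real.exp 1 := Real.exp_one_gt_d9
    have h2 : Real.exp 4 = Real.exp 1 ^ 4 := by
      rw [← Real.exp_nat_mul]; norm_num
    calc (32:ℝ) < 2.7182818283 ^ 4 := by norm_num
      _ < Real.exp 1 ^ 4 := by gcongr <;> norm_num
      _ = Real.exp 4 := h2.symm
  have hp : 0 < Real.exp (b+c) := Real.exp_pos _
  have hp4 : 0 < Real.exp 4 := Real.exp_pos _
  have hp2 : 0 < Real.exp (b+c-4) := Real.exp_pos _
  nlinarith [mul_pos hp2 (sub_pos.2 he4)]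
end

section
/- For all real numbers b, c, A with b, c ≥ 0 and π/2 ≤ A ≤ π, if a satisfies cosh a ≥ cosh b · cosh c − cos A · sinh b · sinh c, then a > b + c − 1. -/
open Real

theorem stmt_1 (a b c A : ℝ) (ha : 0 ≤ a) (hb : 0 ≤ b) (hc : 0 ≤ c)
    (hA₁ : π / 2 ≤ A) (hA₂ : A ≤ π)
    (h : Real.cosh a ≥ Real.cosh b * Real.cosh c - Real.cos A * Real.sinh b * Real.sinh c) :
    a > b + c - 1 := by
  have hcos : Real.cos A ≤ 0 :=
    Real.cos_nonpos_of_pi_div_two_le_of_le hA₁ (by linarith [Real.pi_pos])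
  have hsb : 0 ≤ Real.sinh b := by simpa using Real.sinh_le_sinh.mpr hb
  have hsc : 0 ≤ Real.sinh c := by simpa using Real.sinh_le_sinh.mpr hc
  have h1 : Real.cosh b * Real.cosh c ≤ Real.cosh a := by
    have : Real.cos A * Real.sinh b * Real.sinh c ≤ 0 := by
      have := mul_nonneg hsb hsc
      nlinarith
    linarith
  have h2 : Real.cosh (b + c) = Real.cosh b * Real.cosh c + Real.sinh b * Real.sinh c :=
    Real.cosh_add b c
  have h3 : Real.cosh (b - c) = Real.cosh b * Real.cosh c - Real.sinh b * Real.sinh c :=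
    Real.cosh_sub b c
  have h4 : (1:ℝ) ≤ Real.cosh (b - c) := Real.one_le_cosh _
  have h5 : Real.cosh (b + c) ≤ 2 * Real.cosh a - 1 := by linarith
  -- cosh (a+1) > 2 cosh a - 1
  have hx : (1:ℝ) ≤ Real.exp a := Real.one_le_exp ha
  have hy : Real.exp (-a) ≤ 1 := Real.exp_le_one_iff.2 (by linarith)
  have he : (2.7:ℝ) < Real.exp 1 := by
    have := Real.exp_one_gt_d9; linarith
  have hz : (0:ℝ) < Real.exp (-(a + 1)) := Real.exp_pos _
  have h6 : 2 * Real.cosh a - 1 < Real.cosh (a + 1) := by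
    rw [Real.cosh_eq, Real.cosh_eq]
    have hea : Real.exp (a + 1) = Real.exp a * Real.exp 1 := Real.exp_add a 1
    nlinarith
  have h7 : Real.cosh (b + c) < Real.cosh (a + 1) := lt_of_le_of_lt h5 h6
  have h8 : |b + c| < |a + 1| := Real.cosh_lt_cosh.mp h7
  rw [abs_of_nonneg (by linarith), abs_of_nonneg (by linarith)] at h8
  linarith
end

section
/- Let A ∈ [π/6, π] and b, c > 0 with b + c > 4. Then cosh(b + c − 4) − cosh b · cosh c + cos A · sinh b · sinh c < 0. -/
open Real

theorem stmt_2 (A b c : ℝ) (hA₁ : π / 6 ≤ A) (hA₂ : A ≤ π)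
    (hb : 0 < b) (hc : 0 < c) (hbc : 4 < b + c) :
    Real.cosh (b + c - 4) - Real.cosh b * Real.cosh c
      + Real.cos A * Real.sinh b * Real.sinh c < 0 := by
  have hk1 : Real.cos A ≤ Real.sqrt 3 / 2 := by
    rw [← Real.cos_pi_div_six]
    exact Real.cos_le_cos_of_nonneg_of_le_pi (by positivity) hA₂ hA₁
  have hk2 : -1 ≤ Real.cos A := Real.neg_one_le_cos A
  have hs3 : Real.sqrt 3 < 1.74 := by
    nlinarith [Real.sq_sqrt (by norm_num : (3:ℝ) ≥ 0), Real.sqrt_nonneg 3]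
  have hE : (50:ℝ) < Real.exp 4 := by
    have h := Real.exp_one_gt_d9
    have h2 : (2.7:ℝ)^4 ≤ (Real.exp 1)^4 := pow_le_pow_left₀ (by norm_num) (by linarith) 4
    have hE4 : Real.exp 4 = (Real.exp 1)^4 := by
      rw [← Real.exp_nat_mul]; norm_num
    rw [hE4]; nlinarith
  have hu : (1:ℝ) < Real.exp b := Real.one_lt_exp_iff.mpr hb
  have hv : (1:ℝ) < Real.exp c := Real.one_lt_exp_iff.mpr hc
  have hP : Real.exp 4 < Real.exp b * Real.exp c := by
    rw [← Real.exp_add]; exact Real.exp_lt_exp.mpr hbc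
  have hE0 : (0:ℝ) < Real.exp 4 := Real.exp_pos 4
  have hexp : Real.exp (b + c - 4) = Real.exp b * Real.exp c / Real.exp 4 := by
    rw [Real.exp_sub, Real.exp_add]
  rw [Real.cosh_eq, Real.cosh_eq, Real.cosh_eq, Real.sinh_eq, Real.sinh_eq,
    Real.exp_neg, Real.exp_neg, Real.exp_neg, hexp]
  set u := Real.exp b with hu'
  set v := Real.exp c with hv'
  set E := Real.exp 4 with hE'
  set k := Real.cos A with hk'
  have hu0 : (0:ℝ) < u := by linarith
  have hv0 : (0:ℝ) < v := by linarith
  have hk3 : (0.13:ℝ) ≤ 1 - k := by linarith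
  have hk4 : (0:ℝ) ≤ 1 + k := by linarith
  have hEk : (2:ℝ) < E * (1 - k) := by nlinarith
  have hbr : 0 < (E*(1-k)-2)*(u*v+E) + 2*E*(1+k) := by
    have : 0 < (E*(1-k)-2)*(u*v+E) := mul_pos (by linarith) (by positivity)
    nlinarith [mul_nonneg (le_of_lt hE0) hk4]
  have t1 : 0 < (u*v - E)*((E*(1-k)-2)*(u*v+E) + 2*E*(1+k)) :=
    mul_pos (by linarith) hbr
  have t2 : 0 < E*(1-k)*(E-1)^2 := by
    apply mul_pos (mul_pos hE0 (by linarith)); nlinarith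
  have t3 : 0 ≤ E*(1+k)*(u-v)^2 :=
    mul_nonneg (mul_nonneg (le_of_lt hE0) hk4) (sq_nonneg _)
  have main : 2*(u*v)^2 + 2*E^2 - E*((u^2+1)*(v^2+1)) + k*E*((u^2-1)*(v^2-1)) < 0 := by
    nlinarith [t1, t2, t3]
  have expand : (u * v / E + (u * v / E)⁻¹) / 2 - (u + u⁻¹) / 2 * ((v + v⁻¹) / 2)
      + k * ((u - u⁻¹) / 2) * ((v - v⁻¹) / 2)
      = (2*(u*v)^2 + 2*E^2 - E*((u^2+1)*(v^2+1)) + k*E*((u^2-1)*(v^2-1))) / (4*E*u*v) := by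
    field_simp
    ring
  rw [expand]
  exact div_neg_of_neg_of_pos main (by positivity)
end

section
/- Let (X, ρ) be a CAT(−1) metric space (e.g. a Cartan–Hadamard manifold with sectional curvature K ≤ −1). Let x₁, x₂, x₃ ∈ X, set L₁ = ρ(x₁, x₂), L₂ = ρ(x₂, x₃), and assume L₁ + L₂ > 0. Let x₂′ be the point on the geodesic segment [x₁, x₃] with ρ(x₁, x₂′) = (L₁/(L₁+L₂)) ρ(x₁, x₃). Then cosh(ρ(x₂′, x₂)) ≤ exp(α(L₁ + L₂ − ρ(x₁, x₃))), where α = max(L₁, L₂)/(L₁ + L₂). -/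
/-- A (geodesic) `CAT(-1)` metric space, encoded via the existence of division points on
geodesic segments together with the hyperbolic comparison inequality
(law-of-cosines form of the `CAT(-1)` condition): for every point `m` on a geodesic
segment from `y` to `z` and every `x`,
`cosh d(x,m) · sinh d(y,z) ≤ cosh d(x,y) · sinh d(m,z) + cosh d(x,z) · sinh d(y,m)`. -/
def IsCATMinusOne (X : Type*) [MetricSpace X] : Prop :=
  (∀ x y : X, ∀ t : ℝ, 0 ≤ t → t ≤ 1 →
    ∃ m : X, dist x m = t * dist x y ∧ dist m y = (1 - t) * dist x y) ∧
  (∀ x y z m : X, dist y m + dist m z = dist y z →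
    Real.cosh (dist x m) * Real.sinh (dist y z) ≤
      Real.cosh (dist x y) * Real.sinh (dist m z) +
        Real.cosh (dist x z) * Real.sinh (dist y m))

/-! Write `d = ρ(x₁, x₃)`, `s = L₁ + L₂` and `u = max L₁ L₂ · (s - d) / s`. The division point
splits `[x₁, x₃]` into pieces `a = L₁ d / s` and `b = L₂ d / s` with `L₁ ≤ a + u` and
`L₂ ≤ b + u`, so the `CAT(-1)` comparison gives
`cosh ρ(x₂', x₂) · sinh d ≤ cosh (a + u) · sinh b + cosh (b + u) · sinh a`.
Expanding with the addition formulas, the right-hand side is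
`cosh u · sinh d + 2 sinh u · sinh a · sinh b`, and `2 sinh a sinh b ≤ sinh (a + b)` because
`sinh ≤ cosh`; hence it is at most `sinh d · (cosh u + sinh u) = sinh d · exp u`. -/

open Real

lemma Real.cosh_le_exp {x : ℝ} (hx : 0 ≤ x) : cosh x ≤ exp x := by
  linarith [exp_sub_cosh x, sinh_nonneg_iff.2 hx]

lemma Real.cosh_add_mul_sinh_add_cosh_add_mul_sinh_le {a b u : ℝ}
    (ha : 0 ≤ a) (hb : 0 ≤ b) (hu : 0 ≤ u) :
    cosh (a + u) * sinh b + cosh (b + u) * sinh a ≤ sinh (a + b) * exp u := by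
  have hsa := sinh_nonneg_iff.2 ha
  have hsb := sinh_nonneg_iff.2 hb
  have hsu := sinh_nonneg_iff.2 hu
  have hsinh_sq : 2 * sinh a * sinh b ≤ sinh (a + b) := by
    rw [sinh_add]
    nlinarith [mul_le_mul_of_nonneg_left (sinh_lt_cosh (x := b)).le hsa,
      mul_le_mul_of_nonneg_right (sinh_lt_cosh (x := a)).le hsb]
  calc cosh (a + u) * sinh b + cosh (b + u) * sinh a
      = cosh u * sinh (a + b) + sinh u * (2 * sinh a * sinh b) := by
        simp only [cosh_add, sinh_add]; ring
    _ ≤ cosh u * sinh (a + b) + sinh u * sinh (a + b) := by gcongr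
    _ = sinh (a + b) * exp u := by rw [← cosh_add_sinh]; ring

lemma Real.cosh_mul_sinh_add_cosh_mul_sinh_le_sinh_mul_exp {L₁ L₂ d : ℝ}
    (hL₁ : 0 ≤ L₁) (hL₂ : 0 ≤ L₂) (hd : 0 ≤ d) (hdL : d ≤ L₁ + L₂) (hpos : 0 < L₁ + L₂) :
    cosh L₁ * sinh (L₂ / (L₁ + L₂) * d) + cosh L₂ * sinh (L₁ / (L₁ + L₂) * d) ≤
      sinh d * exp (max L₁ L₂ / (L₁ + L₂) * (L₁ + L₂ - d)) := by
  set a := L₁ / (L₁ + L₂) * d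
  set b := L₂ / (L₁ + L₂) * d
  set u := max L₁ L₂ / (L₁ + L₂) * (L₁ + L₂ - d)
  have ha : 0 ≤ a := by positivity
  have hb : 0 ≤ b := by positivity
  have hu : 0 ≤ u := mul_nonneg (by positivity) (sub_nonneg.2 hdL)
  have hab : a + b = d := by simp only [a, b]; field_simp
  have hcosh_le {L : ℝ} (hL : 0 ≤ L) (hLmax : L ≤ max L₁ L₂) :
      cosh L ≤ cosh (L / (L₁ + L₂) * d + u) := by
    rw [cosh_le_cosh, abs_of_nonneg hL, abs_of_nonneg (by positivity)]
    have : L * (L₁ + L₂ - d) ≤ max L₁ L₂ * (L₁ + L₂ - d) := by gcongr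
    simp only [u]
    rw [div_mul_eq_mul_div, div_mul_eq_mul_div, ← add_div, le_div_iff₀ hpos]
    linarith
  calc cosh L₁ * sinh b + cosh L₂ * sinh a
      ≤ cosh (a + u) * sinh b + cosh (b + u) * sinh a := by
        gcongr ?_ * _ + ?_ * _
        exacts [hcosh_le hL₁ (le_max_left _ _), hcosh_le hL₂ (le_max_right _ _)]
    _ ≤ sinh d * exp u := hab ▸ cosh_add_mul_sinh_add_cosh_add_mul_sinh_le ha hb hu

theorem stmt_3_general {X : Type*} [MetricSpace X] (hX : IsCATMinusOne X)
    (x₁ x₂ x₃ x₂' : X) (L₁ L₂ : ℝ)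
    (hL₁ : L₁ = dist x₁ x₂) (hL₂ : L₂ = dist x₂ x₃)
    (hseg : dist x₁ x₂' + dist x₂' x₃ = dist x₁ x₃)
    (hdiv : dist x₁ x₂' = (L₁ / (L₁ + L₂)) * dist x₁ x₃) :
    Real.cosh (dist x₂' x₂) ≤
      Real.exp ((max L₁ L₂ / (L₁ + L₂)) * (L₁ + L₂ - dist x₁ x₃)) := by
  obtain ⟨-, hcomparison⟩ := hX
  have hL₁_nonneg : 0 ≤ L₁ := hL₁ ▸ dist_nonneg
  have hL₂_nonneg : 0 ≤ L₂ := hL₂ ▸ dist_nonneg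
  have hdL : dist x₁ x₃ ≤ L₁ + L₂ := hL₁ ▸ hL₂ ▸ dist_triangle x₁ x₂ x₃
  rcases (dist_nonneg (x := x₁) (y := x₃)).eq_or_lt with hd | hd
  · -- `sinh 0 = 0` makes the comparison vacuous, but the triangle collapses: `x₃ = x₂' = x₁`.
    have hx₃ : x₃ = x₁ := dist_eq_zero.1 (dist_comm x₁ x₃ ▸ hd.symm)
    have hx₂' : x₂' = x₁ := dist_eq_zero.1 <| by
      rw [dist_comm]
      linarith [dist_nonneg (x := x₁) (y := x₂'), dist_nonneg (x := x₂') (y := x₃)]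
    subst hx₃ hx₂'
    rw [dist_comm] at hL₂
    subst hL₂
    rw [← hL₁, dist_self, sub_zero, max_self, div_mul_cancel_of_imp (by intro; linarith)]
    exact cosh_le_exp hL₁_nonneg
  · have hpos : 0 < L₁ + L₂ := hd.trans_le hdL
    have hrest : dist x₂' x₃ = L₂ / (L₁ + L₂) * dist x₁ x₃ := by
      rw [← sub_eq_of_eq_add' hseg.symm, hdiv]; field_simp; ring
    have hC := hcomparison x₂ x₁ x₃ x₂' hseg
    rw [dist_comm x₂ x₁, ← hL₁, ← hL₂, dist_comm x₂ x₂', hdiv, hrest] at hC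
    refine le_of_mul_le_mul_right ?_ (sinh_pos_iff.2 hd)
    rw [mul_comm (exp _)]
    exact hC.trans (cosh_mul_sinh_add_cosh_mul_sinh_le_sinh_mul_exp
      hL₁_nonneg hL₂_nonneg dist_nonneg hdL hpos)

theorem stmt_3 {X : Type*} [MetricSpace X] (hX : IsCATMinusOne X)
    (x₁ x₂ x₃ x₂' : X) (L₁ L₂ : ℝ)
    (hL₁ : L₁ = dist x₁ x₂) (hL₂ : L₂ = dist x₂ x₃) (hpos : 0 < L₁ + L₂)
    (hseg : dist x₁ x₂' + dist x₂' x₃ = dist x₁ x₃)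
    (hdiv : dist x₁ x₂' = (L₁ / (L₁ + L₂)) * dist x₁ x₃) :
    Real.cosh (dist x₂' x₂) ≤
      Real.exp ((max L₁ L₂ / (L₁ + L₂)) * (L₁ + L₂ - dist x₁ x₃)) :=
  stmt_3_general hX x₁ x₂ x₃ x₂' L₁ L₂ hL₁ hL₂ hseg hdiv
end

section
/- Let (X, ρ) be a Cartan–Hadamard manifold with sectional curvature K ≤ −1 (hence a CAT(−1) space). Let δ, L > 0 with cosh L > e^δ. Let γ be an isometry of X whose displacement l(γ) = inf_{y∈X} ρ(y, γy) satisfies l(γ) ≤ δ, and let x₀ ∈ X with ρ(x₀, γx₀) ≥ L. Then ρ(x₀, γ²x₀) ≤ 2ρ(x₀, γx₀) − (1 − e^δ/cosh L)². -/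
open Real

namespace Real

lemma cosh_add_le_exp_mul_cosh (x : ℝ) {s : ℝ} (hs : 0 ≤ s) :
    cosh (x + s) ≤ exp s * cosh x := by
  have hx : 0 ≤ (cosh x - sinh x) * sinh s :=
    mul_nonneg (cosh_sub_sinh x ▸ (exp_pos _).le) (sinh_nonneg_iff.2 hs)
  rw [cosh_add, ← cosh_add_sinh s]
  linarith

lemma exp_le_of_cosh_le_exp_half {t E : ℝ} (hE : 0 ≤ E) (h : cosh t ≤ exp (E / 2)) :
    exp t ≤ exp (E / 2) * (1 + √E) := by
  have hexp : exp (E / 2) ^ 2 = exp E := by rw [← exp_nat_mul]; ring_nf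
  have hsinh_sq : sinh t ^ 2 ≤ (√E * exp (E / 2)) ^ 2 := by
    have hcosh_sq : cosh t ^ 2 ≤ exp E := hexp ▸ pow_le_pow_left₀ (cosh_pos t).le h 2
    -- `exp E - 1 ≤ E * exp E` is `1 - E ≤ exp (-E)` multiplied by `exp E`
    have hE' : exp E - 1 ≤ E * exp E := by
      have := mul_le_mul_of_nonneg_left (add_one_le_exp (-E)) (exp_pos E).le
      rw [mul_add, ← exp_add, add_neg_cancel, exp_zero] at this
      linarith
    rw [mul_pow, sq_sqrt hE, hexp]
    linarith [cosh_sq t]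
  have hsinh : sinh t ≤ √E * exp (E / 2) := (abs_le_of_sq_le_sq' hsinh_sq (by positivity)).2
  rw [← cosh_add_sinh]
  linarith

lemma sq_one_sub_exp_div_le {δ E M : ℝ} (hM : exp δ < M)
    (h : log M ≤ δ + (E + log (1 + √E))) : (1 - exp δ / M) ^ 2 ≤ E := by
  have hM0 : 0 < M := (exp_pos δ).trans hM
  set c := 1 - exp δ / M with hc
  have hc0 : 0 < c := by rw [hc, sub_pos, div_lt_one hM0]; exact hM
  have hc1 : c < 1 := by rw [hc, sub_lt_self_iff]; positivity
  have hlogM : log M = δ - log (1 - c) := by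
    rw [hc, sub_sub_cancel, log_div (exp_pos δ).ne' hM0.ne', log_exp]
    ring
  -- `log (1 - c²) ≤ -c²`
  have hlog_sq : c ^ 2 + log (1 + c) + log (1 - c) ≤ 0 := by
    have := log_le_sub_one_of_pos (show 0 < (1 + c) * (1 - c) by nlinarith)
    rw [log_mul (by linarith) (by linarith)] at this
    nlinarith
  by_contra! hlt
  have hsqrt : √E < c := (sqrt_lt' hc0).2 hlt
  have : log (1 + √E) < log (1 + c) := log_lt_log (by positivity) (by linarith)
  linarith

end Real

namespace IsometryEquiv

variable {X : Type*} [MetricSpace X]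

def triangleDefect (γ : X ≃ᵢ X) (x : X) : ℝ := 2 * dist x (γ x) - dist x (γ (γ x))

lemma triangleDefect_nonneg (γ : X ≃ᵢ X) (x : X) : 0 ≤ γ.triangleDefect x := by
  have := dist_triangle x (γ x) (γ (γ x))
  rw [γ.dist_eq] at this
  rw [triangleDefect]
  linarith

lemma cosh_dist_le_exp_mul_cosh_half (γ : X ≃ᵢ X) (x : X) :
    cosh (dist x (γ x)) ≤ exp (γ.triangleDefect x / 2) * cosh (dist x (γ (γ x)) / 2) := by
  convert cosh_add_le_exp_mul_cosh (dist x (γ (γ x)) / 2) (s := γ.triangleDefect x / 2)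
    (by linarith [γ.triangleDefect_nonneg x]) using 2
  rw [triangleDefect]
  ring

end IsometryEquiv

namespace IsCATMinusOne

variable {X : Type*} [MetricSpace X] (hX : IsCATMinusOne X)
include hX

lemma exists_midpoint (y z : X) : ∃ m, dist y m = dist y z / 2 ∧ dist m z = dist y z / 2 := by
  obtain ⟨m, hym, hmz⟩ := hX.1 y z (1 / 2) (by norm_num) (by norm_num)
  exact ⟨m, by rw [hym]; ring, by rw [hmz]; ring⟩

lemma two_mul_cosh_mul_cosh_le (x : X) {y z m : X} (hym : dist y m = dist y z / 2)
    (hmz : dist m z = dist y z / 2) :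
    2 * cosh (dist x m) * cosh (dist y z / 2) ≤ cosh (dist x y) + cosh (dist x z) := by
  rcases (dist_nonneg : 0 ≤ dist y z).eq_or_lt with hyz | hyz
  · obtain rfl : y = z := dist_eq_zero.1 hyz.symm
    obtain rfl : y = m := by simpa using hym
    rw [dist_self, zero_div, cosh_zero]
    linarith
  have hsinh : 0 < sinh (dist y z / 2) := sinh_pos_iff.2 (by linarith)
  have hcmp := hX.2 x y z m (by rw [hym, hmz]; ring)
  rw [hym, hmz, show dist y z = 2 * (dist y z / 2) by ring, sinh_two_mul,
    mul_div_cancel_left₀ _ two_ne_zero] at hcmp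
  nlinarith

variable (γ : X ≃ᵢ X)

lemma cosh_dist_midpoint_le {x m : X} (hxm : dist x m = dist x (γ (γ x)) / 2)
    (hmx : dist m (γ (γ x)) = dist x (γ (γ x)) / 2) :
    cosh (dist (γ x) m) ≤ exp (γ.triangleDefect x / 2) := by
  have hmedian := hX.two_mul_cosh_mul_cosh_le (γ x) hxm hmx
  rw [dist_comm (γ x) x, γ.dist_eq] at hmedian
  have := γ.cosh_dist_le_exp_mul_cosh_half x
  exact le_of_mul_le_mul_right (by linarith) (cosh_pos (dist x (γ (γ x)) / 2))

lemma cosh_half_dist_le {x m : X} (hxm : dist x m = dist x (γ (γ x)) / 2)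
    (hmx : dist m (γ (γ x)) = dist x (γ (γ x)) / 2) (y : X) :
    cosh (dist x (γ (γ x)) / 2) ≤ exp (dist (γ x) m + dist y (γ y)) := by
  have hmedian := hX.two_mul_cosh_mul_cosh_le y hxm hmx
  have hyγx : dist y (γ x) ≤ dist y m + dist (γ x) m := dist_triangle_right _ _ _
  have hyx : dist y x ≤ dist y m + (dist (γ x) m + dist y (γ y)) := by
    have := dist_triangle (γ y) y (γ x)
    rw [γ.dist_eq, dist_comm (γ y)] at this
    linarith
  have hyγγx : dist y (γ (γ x)) ≤ dist y m + (dist (γ x) m + dist y (γ y)) := by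
    have := dist_triangle y (γ y) (γ (γ x))
    rw [γ.dist_eq] at this
    linarith
  have hbound := cosh_add_le_exp_mul_cosh (dist y m)
    (add_nonneg dist_nonneg dist_nonneg : 0 ≤ dist (γ x) m + dist y (γ y))
  have := cosh_strictMonoOn.monotoneOn dist_nonneg (dist_nonneg.trans hyx) hyx
  have := cosh_strictMonoOn.monotoneOn dist_nonneg (dist_nonneg.trans hyγγx) hyγγx
  exact le_of_mul_le_mul_left (by nlinarith) (by positivity : 0 < 2 * cosh (dist y m))

lemma log_cosh_dist_le (x y : X) :
    log (cosh (dist x (γ x))) ≤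
      dist y (γ y) + (γ.triangleDefect x + log (1 + √(γ.triangleDefect x))) := by
  obtain ⟨m, hxm, hmx⟩ := hX.exists_midpoint x (γ (γ x))
  set E := γ.triangleDefect x
  have hE : 0 ≤ E := γ.triangleDefect_nonneg x
  have hexp : exp (dist (γ x) m) ≤ exp (E / 2) * (1 + √E) :=
    exp_le_of_cosh_le_exp_half hE (hX.cosh_dist_midpoint_le γ hxm hmx)
  have hexp_sq : exp E = exp (E / 2) ^ 2 := by rw [← exp_nat_mul]; ring_nf
  rw [log_le_iff_le_exp (cosh_pos _)]
  calc cosh (dist x (γ x))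
      ≤ exp (E / 2) * cosh (dist x (γ (γ x)) / 2) := γ.cosh_dist_le_exp_mul_cosh_half x
    _ ≤ exp (E / 2) * (exp (dist (γ x) m) * exp (dist y (γ y))) := by
        rw [← exp_add]; gcongr; exact hX.cosh_half_dist_le γ hxm hmx y
    _ ≤ exp (E / 2) * (exp (E / 2) * (1 + √E) * exp (dist y (γ y))) := by gcongr
    _ = exp (dist y (γ y) + (E + log (1 + √E))) := by
        rw [exp_add, exp_add, exp_log (by positivity), hexp_sq]
        ring

end IsCATMinusOne

theorem stmt_4_general {X : Type*} [MetricSpace X] (hX : IsCATMinusOne X)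
    (γ : X ≃ᵢ X) (δ L : ℝ) (hL : 0 < L)
    (hcosh : Real.exp δ < Real.cosh L)
    (hdisp : (⨅ y : X, dist y (γ y)) ≤ δ)
    (x₀ : X) (hx₀ : L ≤ dist x₀ (γ x₀)) :
    dist x₀ (γ (γ x₀)) ≤
      2 * dist x₀ (γ x₀) - (1 - Real.exp δ / Real.cosh L) ^ 2 := by
  have : Nonempty X := ⟨x₀⟩
  set E := γ.triangleDefect x₀ with hE
  have hinf : log (cosh (dist x₀ (γ x₀))) - (E + log (1 + √E)) ≤ ⨅ y : X, dist y (γ y) :=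
    le_ciInf fun y => sub_le_iff_le_add.2 (hX.log_cosh_dist_le γ x₀ y)
  have hlog : log (cosh L) ≤ δ + (E + log (1 + √E)) := calc
    log (cosh L) ≤ log (cosh (dist x₀ (γ x₀))) :=
      log_le_log (cosh_pos L) (cosh_strictMonoOn.monotoneOn hL.le (hL.le.trans hx₀) hx₀)
    _ ≤ δ + (E + log (1 + √E)) := by linarith
  have hdefect := sq_one_sub_exp_div_le hcosh hlog
  rw [hE, IsometryEquiv.triangleDefect] at hdefect
  linarith

theorem stmt_4 {X : Type*} [MetricSpace X] (hX : IsCATMinusOne X)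
    (γ : X ≃ᵢ X) (δ L : ℝ) (hδ : 0 < δ) (hL : 0 < L)
    (hcosh : Real.exp δ < Real.cosh L)
    (hdisp : (⨅ y : X, dist y (γ y)) ≤ δ)
    (x₀ : X) (hx₀ : L ≤ dist x₀ (γ x₀)) :
    dist x₀ (γ (γ x₀)) ≤
      2 * dist x₀ (γ x₀) - (1 - Real.exp δ / Real.cosh L) ^ 2 :=
  stmt_4_general hX γ δ L hL hcosh hdisp x₀ hx₀
end

section
/- Let (X, ρ) be a CAT(−1) space and y₀, y₁, y₂, y₃ ∈ X with ρ(y₁, y₂) > 0. Suppose ρ(y₀,y₁) + ρ(y₁,y₂) − ρ(y₀,y₂) ≤ η₁ and ρ(y₁,y₂) + ρ(y₂,y₃) − ρ(y₁,y₃) ≤ η₂ for some η₁, η₂ ≥ 0. Then ρ(y₀,y₁) + ρ(y₁,y₂) + ρ(y₂,y₃) − ρ(y₀,y₃) ≤ (1 + ρ(y₂,y₃)/ρ(y₁,y₂)) · (η₁ + arccosh(e^{η₂})). -/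
/-- The inverse hyperbolic cosine, defined on `[1, ∞)` by
`arcosh x = log (x + √(x² - 1))`. -/
noncomputable def arcosh (x : ℝ) : ℝ := Real.log (x + Real.sqrt (x ^ 2 - 1))

/-!
Let `δ` be the defect of `y₁ y₂ y₃` at `y₂` and put `m` on the geodesic `[y₁, y₃]` at distance
`(y₂ | y₃)_{y₁}` from `y₁`. Comparing with the hyperbolic plane, the thin triangle `y₁ y₂ y₃`
gives `cosh ρ(y₂, m) ≤ e^{δ/2}`, so `ρ(y₂, m) + δ/2 ≤ arcosh (e^{η₂})` and the defect of
`y₀ y₁ m` at `y₁` is at most `η₁ + arcosh (e^{η₂}) - δ`. By the comparison inequality and the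
convexity of `λ ↦ e^{λ t}`, the defect of `y₀ y₁ z` grows at most linearly in `ρ(y₁, z)` along a
geodesic from `y₁`, which carries the bound from `m` to `y₃`. When `2 ρ(y₁, y₂)` is smaller than
`η₁ + arcosh (e^{η₂})` the triangle inequality alone suffices.
-/

namespace Real

lemma cosh_add_le_cosh_mul_exp (x : ℝ) {y : ℝ} (hy : 0 ≤ y) : cosh (x + y) ≤ cosh x * exp y := by
  rw [cosh_add, ← cosh_add_sinh y, mul_add]
  have := mul_le_mul_of_nonneg_right (sinh_lt_cosh x).le (sinh_nonneg_iff.2 hy)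
  linarith

lemma le_arcosh_of_cosh_le {d x : ℝ} (hd : 0 ≤ d) (h : cosh d ≤ x) : d ≤ arcosh x := by
  have hcosh : 0 < cosh d := cosh_pos d
  rw [← arcosh_cosh hd]
  exact (arcosh_le_arcosh hcosh (hcosh.trans_le h)).2 h

lemma self_le_arcosh_exp {t : ℝ} (ht : 0 ≤ t) : t ≤ arcosh (exp t) :=
  le_arcosh_of_cosh_le ht (by simpa using cosh_add_le_cosh_mul_exp 0 ht)

lemma sinh_sub_add_exp_mul_sinh_le {l s c : ℝ} (hl : |l| ≤ 1) (hs : 0 ≤ s) (hsc : s ≤ c) :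
    sinh (c - s) + exp (l * c) * sinh s ≤ exp (l * s) * sinh c := by
  have hsinh_s : 0 ≤ sinh s := sinh_nonneg_iff.2 hs
  have hsinh_cs : 0 ≤ sinh (c - s) := sinh_nonneg_iff.2 (by linarith)
  have h₁ := exp_mul_le_cosh_add_mul_sinh hl (c - s)
  have h₂ : exp (-(l * s)) ≤ cosh s - l * sinh s := by
    simpa [mul_neg, ← sub_eq_add_neg] using exp_mul_le_cosh_add_mul_sinh hl (-s)
  have hsplit : sinh c = sinh s * cosh (c - s) + cosh s * sinh (c - s) := by
    rw [← sinh_add]; ring_nf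
  have key : sinh s * exp (l * (c - s)) + sinh (c - s) * exp (-(l * s)) ≤ sinh c := by
    calc _ ≤ sinh s * (cosh (c - s) + l * sinh (c - s)) + sinh (c - s) * (cosh s - l * sinh s) :=
          by gcongr
      _ = sinh c := by rw [hsplit]; ring
  have e₁ : exp (l * c) = exp (l * s) * exp (l * (c - s)) := by rw [← exp_add]; ring_nf
  have e₂ : exp (l * s) * exp (-(l * s)) = 1 := by rw [← exp_add]; simp
  calc _ = exp (l * s) * (sinh s * exp (l * (c - s)) + sinh (c - s) * exp (-(l * s))) := by
        rw [e₁]; linear_combination -sinh (c - s) * e₂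
    _ ≤ exp (l * s) * sinh c := by gcongr

lemma cosh_mul_sinh_sub_add_cosh_mul_sinh_le {l s c : ℝ} (r : ℝ) (hl : |l| ≤ 1) (hs : 0 ≤ s)
    (hsc : s ≤ c) :
    cosh r * sinh (c - s) + cosh (r + l * c) * sinh s ≤ cosh (r + l * s) * sinh c := by
  have hl_pos := sinh_sub_add_exp_mul_sinh_le hl hs hsc
  have hl_neg := sinh_sub_add_exp_mul_sinh_le (l := -l) (by rwa [abs_neg]) hs hsc
  simp only [neg_mul] at hl_neg
  simp only [cosh_eq, neg_add, exp_add]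
  linarith [mul_le_mul_of_nonneg_left hl_pos (exp_pos r).le,
    mul_le_mul_of_nonneg_left hl_neg (exp_pos (-r)).le]

lemma cosh_add_mul_sinh_add_cosh_add_mul_sinh_le_s6 {s t d : ℝ} (hs : 0 ≤ s) (ht : 0 ≤ t)
    (hd : 0 ≤ d) :
    cosh (s + d) * sinh t + cosh (t + d) * sinh s ≤ exp d * sinh (s + t) := by
  have key : exp d * sinh (s + t) - (cosh (s + d) * sinh t + cosh (t + d) * sinh s) =
      sinh d * (sinh s * exp (-t) + sinh t * exp (-s)) := by
    rw [← cosh_sub_sinh, ← cosh_sub_sinh, ← cosh_add_sinh d, cosh_add, cosh_add, sinh_add]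
    ring
  have : 0 ≤ sinh d * (sinh s * exp (-t) + sinh t * exp (-s)) := by
    have := sinh_nonneg_iff.2 hs
    have := sinh_nonneg_iff.2 ht
    have := sinh_nonneg_iff.2 hd
    positivity
  linarith

end Real

lemma add_sub_div_mul_sub_add_le {a b δ E : ℝ} (ha : 0 < a) (hb : 0 ≤ b) (hδ : 0 ≤ δ)
    (hδE : δ ≤ E) (hEa : E < 2 * a) :
    (a + b - δ) / (a - δ / 2) * (E - δ) + δ ≤ (1 + b / a) * E := by
  have hs : 0 < a - δ / 2 := by linarith
  rw [div_mul_eq_mul_div, div_add' _ _ _ hs.ne', one_add_div ha.ne', div_mul_eq_mul_div,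
    div_le_div_iff₀ hs ha]
  -- the difference of the two sides is `δ / 2 * (a * (E - δ) + b * (2 * a - E))`
  nlinarith [mul_nonneg hδ (mul_nonneg ha.le (sub_nonneg.2 hδE)),
    mul_nonneg hδ (mul_nonneg hb (sub_nonneg.2 hEa.le))]

namespace IsCATMinusOne

variable {X : Type*} [MetricSpace X]

lemma exists_dist_eq (hX : IsCATMinusOne X) {y z : X} {s : ℝ} (hs : 0 ≤ s)
    (hsz : s ≤ dist y z) : ∃ m, dist y m = s ∧ dist y m + dist m z = dist y z := by
  have hs_div : s / dist y z * dist y z = s :=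
    div_mul_cancel_of_imp fun h => le_antisymm (h ▸ hsz) hs
  obtain ⟨m, hym, hmz⟩ :=
    hX.1 y z (s / dist y z) (div_nonneg hs dist_nonneg) (div_le_one_of_le₀ hsz dist_nonneg)
  exact ⟨m, by rw [hym, hs_div], by rw [hym, hmz]; ring⟩

lemma defect_le_div_mul_defect (hX : IsCATMinusOne X) {x y z m : X}
    (hm : dist y m + dist m z = dist y z) (hym : 0 < dist y m) :
    dist x y + dist y z - dist x z ≤
      dist y z / dist y m * (dist x y + dist y m - dist x m) := by
  set r := dist x y
  set s := dist y m
  set c := dist y z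
  set u := dist x m
  set l := (u - r) / s
  have hl : |l| ≤ 1 := by
    rw [abs_div, abs_of_pos hym, div_le_one hym]
    simpa [dist_comm] using abs_dist_sub_le m y x
  have hlu : r + l * s = u := by rw [div_mul_cancel₀ _ hym.ne']; ring
  have hmz : dist m z = c - s := by linarith
  have hchord := Real.cosh_mul_sinh_sub_add_cosh_mul_sinh_le r hl hym.le
    (by linarith [dist_nonneg (x := m) (y := z)] : s ≤ c)
  have hcomp := hX.2 x y z m hm
  rw [hlu, ← hmz] at hchord
  have hcosh : Real.cosh (r + l * c) ≤ Real.cosh (dist x z) :=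
    le_of_mul_le_mul_right (by linarith) (Real.sinh_pos_iff.2 hym)
  have hw : r + l * c ≤ dist x z :=
    (le_abs_self _).trans ((Real.cosh_le_cosh.1 hcosh).trans_eq (abs_of_nonneg dist_nonneg))
  calc r + c - dist x z ≤ c - l * c := by linarith
    _ = c / s * (r + s - u) := by simp only [l]; field_simp; ring

lemma dist_add_half_defect_le_arcosh (hX : IsCATMinusOne X) {x y z m : X}
    (hm : dist y m + dist m z = dist y z)
    (hym : dist y m = (dist y x + dist y z - dist x z) / 2) (hyz : 0 < dist y z) :
    dist x m + (dist y x + dist x z - dist y z) / 2 ≤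
      Real.arcosh (Real.exp (dist y x + dist x z - dist y z)) := by
  set δ := dist y x + dist x z - dist y z
  have hδ : 0 ≤ δ / 2 := by linarith [dist_triangle y x z]
  have hyx : dist y m + δ / 2 = dist x y := by rw [dist_comm x y]; linarith
  have hxz : dist m z + δ / 2 = dist x z := by linarith
  have hthin := Real.cosh_add_mul_sinh_add_cosh_add_mul_sinh_le_s6 dist_nonneg dist_nonneg hδ
    (s := dist y m) (t := dist m z)
  rw [hyx, hxz, hm] at hthin
  have hcosh : Real.cosh (dist x m) ≤ Real.exp (δ / 2) :=
    le_of_mul_le_mul_right ((hX.2 x y z m hm).trans hthin) (Real.sinh_pos_iff.2 hyz)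
  refine Real.le_arcosh_of_cosh_le (add_nonneg dist_nonneg hδ) ?_
  calc Real.cosh (dist x m + δ / 2) ≤ Real.cosh (dist x m) * Real.exp (δ / 2) :=
        Real.cosh_add_le_cosh_mul_exp _ hδ
    _ ≤ Real.exp (δ / 2) * Real.exp (δ / 2) := by gcongr
    _ = Real.exp δ := by rw [← Real.exp_add, add_halves]

end IsCATMinusOne

theorem stmt_6 {X : Type*} [MetricSpace X] (hX : IsCATMinusOne X)
    (y₀ y₁ y₂ y₃ : X) (η₁ η₂ : ℝ) (hη₁ : 0 ≤ η₁) (hη₂ : 0 ≤ η₂)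
    (hpos : 0 < dist y₁ y₂)
    (h₁ : dist y₀ y₁ + dist y₁ y₂ - dist y₀ y₂ ≤ η₁)
    (h₂ : dist y₁ y₂ + dist y₂ y₃ - dist y₁ y₃ ≤ η₂) :
    dist y₀ y₁ + dist y₁ y₂ + dist y₂ y₃ - dist y₀ y₃ ≤
      (1 + dist y₂ y₃ / dist y₁ y₂) * (η₁ + arcosh (Real.exp η₂)) := by
  change _ ≤ _ * (η₁ + Real.arcosh (Real.exp η₂))
  set a := dist y₁ y₂
  set b := dist y₂ y₃
  set c := dist y₁ y₃
  set h := Real.arcosh (Real.exp η₂)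
  set δ := a + b - c
  have hη₂h : η₂ ≤ h := Real.self_le_arcosh_exp hη₂
  have hb : 0 ≤ b := dist_nonneg
  rcases le_or_gt (2 * a) (η₁ + h) with hlarge | hsmall
  · have h2b : 2 * b ≤ b / a * (η₁ + h) := by
      rw [div_mul_eq_mul_div, le_div_iff₀ hpos]
      linarith [mul_le_mul_of_nonneg_left hlarge hb]
    linarith [dist_triangle y₀ y₃ y₂, dist_comm y₂ y₃]
  · have hδ : 0 ≤ δ := by linarith [dist_triangle y₁ y₂ y₃]
    obtain ⟨m, hy₁m, hm⟩ := hX.exists_dist_eq (y := y₁) (z := y₃) (s := a - δ / 2)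
      (by linarith) (by linarith [dist_triangle y₁ y₃ y₂, dist_comm y₂ y₃])
    have hc : 0 < c := by linarith [dist_nonneg (x := m) (y := y₃)]
    have hy₂m : dist y₂ m + δ / 2 ≤ h :=
      (hX.dist_add_half_defect_le_arcosh hm (by rw [hy₁m]; ring) hc).trans
        ((Real.arcosh_le_arcosh (Real.exp_pos _) (Real.exp_pos _)).2 (Real.exp_le_exp.2 h₂))
    have hy₀m : dist y₀ y₁ + dist y₁ m - dist y₀ m ≤ η₁ + h - δ := by
      linarith [dist_triangle y₀ m y₂, dist_comm m y₂]
    calc dist y₀ y₁ + a + b - dist y₀ y₃ = (dist y₀ y₁ + c - dist y₀ y₃) + δ := by ring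
      _ ≤ c / dist y₁ m * (η₁ + h - δ) + δ := by
        gcongr
        exact (hX.defect_le_div_mul_defect hm (by linarith)).trans (by gcongr)
      _ = (a + b - δ) / (a - δ / 2) * (η₁ + h - δ) + δ := by rw [hy₁m]; ring
      _ ≤ (1 + b / a) * (η₁ + h) := add_sub_div_mul_sub_add_le hpos hb hδ (by linarith) hsmall
end

section
/- Let Γ be a group with finite generating set S acting by isometries on a metric space (X, ρ), let x₀ ∈ X and L = max_{σ∈S} ρ(x₀, σx₀). Suppose γ = a·γ′·b in Γ with l_S(γ) = l_S(a) + l_S(γ′) + l_S(b) and l_S(γ′) > 0, and suppose γ is (L, η)-straight, i.e. ρ(x₀, γx₀) ≥ (L − η)·l_S(γ) for some η ≥ 0. Then γ′ is (L, Cη)-straight with C = l_S(γ)/l_S(γ′), i.e. ρ(x₀, γ′x₀) ≥ (L − Cη)·l_S(γ′). -/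
open Pointwise

/-- The word length of `γ` with respect to a generating set `S`: the least `n` such that
`γ` is a product of `n` elements of `S ∪ S⁻¹` (so the identity has word length `0`). -/
noncomputable def wordLength {Γ : Type*} [Group Γ] (S : Set Γ) (γ : Γ) : ℕ :=
  sInf {n : ℕ | γ ∈ (S ∪ S⁻¹) ^ n}

/-
The orbit map `g ↦ g • x₀` is `L`-Lipschitz for the word length, so in the triangle inequality
through `a • x₀` and `(a * γ') • x₀` the outer pieces cost at most `L · (l(a) + l(b))`. As
`l(γ) = l(a) + l(γ') + l(b)`, the whole deficit `η · l(γ)` of `γ` falls on `γ'`, i.e. a deficit of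
`(l(γ) / l(γ')) · η` per unit of `l(γ')`.
-/

theorem Submonoid.exists_mem_pow_of_mem_closure {M : Type*} [Monoid M] {s : Set M} {x : M}
    (hx : x ∈ Submonoid.closure s) : ∃ n : ℕ, x ∈ s ^ n := by
  induction hx using Submonoid.closure_induction with
  | mem x hx => exact ⟨1, by simpa using hx⟩
  | one => exact ⟨0, Set.mem_one.2 rfl⟩
  | mul x y _ _ ihx ihy =>
    obtain ⟨m, hm⟩ := ihx
    obtain ⟨n, hn⟩ := ihy
    exact ⟨m + n, pow_add s m n ▸ Set.mul_mem_mul hm hn⟩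

theorem mem_pow_wordLength {Γ : Type*} [Group Γ] {S : Set Γ}
    (hS : Subgroup.closure S = ⊤) (g : Γ) : g ∈ (S ∪ S⁻¹) ^ wordLength S g := by
  have hg : g ∈ Submonoid.closure (S ∪ S⁻¹) := by
    rw [← Subgroup.closure_toSubmonoid, hS]
    trivial
  exact Nat.sInf_mem (Submonoid.exists_mem_pow_of_mem_closure hg)

section IsometricAction

variable {Γ X : Type*} [Group Γ] [PseudoMetricSpace X] [MulAction Γ X] [IsIsometricSMul Γ X]

theorem dist_inv_smul_eq (x : X) (g : Γ) : dist x (g⁻¹ • x) = dist x (g • x) := by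
  rw [← dist_smul g, smul_inv_smul, dist_comm]

theorem dist_mul_smul_le (x : X) (g h : Γ) :
    dist x ((g * h) • x) ≤ dist x (g • x) + dist x (h • x) :=
  calc dist x ((g * h) • x) ≤ dist x (g • x) + dist (g • x) (g • h • x) := by
        rw [mul_smul]; exact dist_triangle _ _ _
    _ = dist x (g • x) + dist x (h • x) := by rw [dist_smul]

theorem dist_mul_mul_smul_le (x : X) (a g b : Γ) :
    dist x ((a * g * b) • x) ≤ dist x (a • x) + dist x (g • x) + dist x (b • x) :=
  (dist_mul_smul_le x _ b).trans (add_le_add_left (dist_mul_smul_le x a g) _)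

theorem dist_smul_le_of_mem_pow {T : Set Γ} {x : X} {L : ℝ} (hT : ∀ t ∈ T, dist x (t • x) ≤ L) :
    ∀ {n : ℕ} {g : Γ}, g ∈ T ^ n → dist x (g • x) ≤ L * n
  | 0, g, hg => by
    rw [pow_zero, Set.mem_one] at hg
    simp [hg]
  | n + 1, _, hg => by
    obtain ⟨t, ht, h, hh, rfl⟩ := (pow_succ' T n ▸ hg : _ ∈ T * T ^ n)
    calc dist x ((t * h) • x) ≤ L + L * n :=
          (dist_mul_smul_le x t h).trans (add_le_add (hT t ht) (dist_smul_le_of_mem_pow hT hh))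
      _ = L * ↑(n + 1) := by push_cast; ring

theorem dist_smul_le_sup'_of_mem_union_inv {S : Finset Γ} (hS : S.Nonempty) (x : X) {t : Γ}
    (ht : t ∈ (S : Set Γ) ∪ (S : Set Γ)⁻¹) :
    dist x (t • x) ≤ S.sup' hS fun σ => dist x (σ • x) := by
  rcases ht with ht | ht
  · exact S.le_sup' (fun σ => dist x (σ • x)) ht
  · rw [← dist_inv_smul_eq]
    exact S.le_sup' (fun σ => dist x (σ • x)) ht

theorem dist_smul_le_mul_wordLength {S : Finset Γ} (hS : S.Nonempty)
    (hgen : Subgroup.closure (S : Set Γ) = ⊤) (x : X) (g : Γ) :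
    dist x (g • x) ≤ (S.sup' hS fun σ => dist x (σ • x)) * wordLength (S : Set Γ) g :=
  dist_smul_le_of_mem_pow (fun _ => dist_smul_le_sup'_of_mem_union_inv hS x)
    (mem_pow_wordLength hgen g)

end IsometricAction

theorem stmt_14_general {Γ X : Type*} [Group Γ] [MetricSpace X] [MulAction Γ X]
    (hiso : ∀ γ : Γ, Isometry fun x : X => γ • x)
    (S : Finset Γ) (hSne : S.Nonempty)
    (hgen : Subgroup.closure (S : Set Γ) = ⊤)
    (x₀ : X) (L : ℝ) (hL : L = S.sup' hSne fun σ => dist x₀ (σ • x₀))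
    (η : ℝ) (γ a γ' b : Γ)
    (hdecomp : γ = a * γ' * b)
    (hlen : wordLength (S : Set Γ) γ =
      wordLength (S : Set Γ) a + wordLength (S : Set Γ) γ' + wordLength (S : Set Γ) b)
    (hstraight : dist x₀ (γ • x₀) ≥ (L - η) * (wordLength (S : Set Γ) γ : ℝ)) :
    dist x₀ (γ' • x₀) ≥
      (L - ((wordLength (S : Set Γ) γ : ℝ) / (wordLength (S : Set Γ) γ' : ℝ)) * η) *
        (wordLength (S : Set Γ) γ' : ℝ) := by
  have : IsIsometricSMul Γ X := ⟨hiso⟩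
  have hbound := dist_smul_le_mul_wordLength hSne hgen x₀
  rw [← hL] at hbound
  have htri := dist_mul_mul_smul_le x₀ a γ' b
  rw [← hdecomp] at htri
  have hlen' : (wordLength (S : Set Γ) γ : ℝ) =
      wordLength (S : Set Γ) a + wordLength (S : Set Γ) γ' + wordLength (S : Set Γ) b := by
    exact_mod_cast hlen
  rcases eq_or_ne (wordLength (S : Set Γ) γ' : ℝ) 0 with h0 | h0
  · simp [h0]
  · calc (L - (wordLength (S : Set Γ) γ : ℝ) / wordLength (S : Set Γ) γ' * η) *
          wordLength (S : Set Γ) γ'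
        = L * wordLength (S : Set Γ) γ' - η * wordLength (S : Set Γ) γ := by field_simp
      _ ≤ dist x₀ (γ' • x₀) := by
        linear_combination hstraight + htri + hbound a + hbound b - L * hlen'

theorem stmt_14 {Γ X : Type*} [Group Γ] [MetricSpace X] [MulAction Γ X]
    (hiso : ∀ γ : Γ, Isometry fun x : X => γ • x)
    (S : Finset Γ) (hSne : S.Nonempty)
    (hgen : Subgroup.closure (S : Set Γ) = ⊤)
    (x₀ : X) (L : ℝ) (hL : L = S.sup' hSne fun σ => dist x₀ (σ • x₀))
    (η : ℝ) (hη : 0 ≤ η) (γ a γ' b : Γ)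
    (hdecomp : γ = a * γ' * b)
    (hlen : wordLength (S : Set Γ) γ =
      wordLength (S : Set Γ) a + wordLength (S : Set Γ) γ' + wordLength (S : Set Γ) b)
    (hpos : 0 < wordLength (S : Set Γ) γ')
    (hstraight : dist x₀ (γ • x₀) ≥ (L - η) * (wordLength (S : Set Γ) γ : ℝ)) :
    dist x₀ (γ' • x₀) ≥
      (L - ((wordLength (S : Set Γ) γ : ℝ) / (wordLength (S : Set Γ) γ' : ℝ)) * η) *
        (wordLength (S : Set Γ) γ' : ℝ) :=
  stmt_14_general hiso S hSne hgen x₀ L hL η γ a γ' b hdecomp hlen hstraight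
end

section
/- Let F be the free group on two generators a, b, and let w ∈ F be a reduced word of length 6 such that w contains no subword of the form α² and no subword of the form αβα, where α, β range over nontrivial elements of F of length at most 2 (subword meaning: w = u·γ·v as reduced words with lengths adding up). Then no such w exists; i.e., every reduced word of length 6 in F contains a subword α² or αβα with 1 ≤ |α|, |β| ≤ 2. -/
/-!
A reduced word with no factor `pp` has consecutive letters on different generators, so over
two generators the generators alternate. If moreover no factor `pqp` occurs, letters two
apart are mutually inverse, hence letters four apart coincide: the word is `abABab`, which is
`αβα` with `α = ab`.
-/

namespace List

variable {α : Type*}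

def HasShortSquare (L : List α) : Prop :=
  ∃ u x v, 1 ≤ x.length ∧ x.length ≤ 2 ∧ L = u ++ (x ++ x) ++ v

def HasShortXYX (L : List α) : Prop :=
  ∃ u x y v, 1 ≤ x.length ∧ x.length ≤ 2 ∧ 1 ≤ y.length ∧ y.length ≤ 2 ∧
    L = u ++ (x ++ y ++ x) ++ v

end List

namespace FreeGroup

open List

variable {α : Type*}

theorem IsReduced.norm_mk [DecidableEq α] {L : List (α × Bool)} (h : IsReduced L) :
    norm (mk L) = L.length := by
  rw [norm, toWord_mk, h.reduce_eq]

theorem IsReduced.eq_of_ne {p q r s t : Fin 2 × Bool} (h : IsReduced [p, q, r, s, t])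
    (hpq : p ≠ q) (hqr : q ≠ r) (hrs : r ≠ s) (hst : s ≠ t) (hpr : p ≠ r) (hrt : r ≠ t) :
    p = t := by
  simp only [isReduced_cons_cons, IsReduced.singleton, and_true] at h
  obtain ⟨hpq', hqr', hrs', hst'⟩ := h
  have fst_ne {x y : Fin 2 × Bool} (hxy : x ≠ y) (hred : x.1 = y.1 → x.2 = y.2) : x.1 ≠ y.1 :=
    fun h₁ => hxy (Prod.ext h₁ (hred h₁))
  have hpr₁ : p.1 = r.1 := by have := fst_ne hpq hpq'; have := fst_ne hqr hqr'; omega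
  have hrt₁ : r.1 = t.1 := by have := fst_ne hrs hrs'; have := fst_ne hst hst'; omega
  have hpr₂ : p.2 ≠ r.2 := fun h₂ => hpr (Prod.ext hpr₁ h₂)
  have hrt₂ : r.2 ≠ t.2 := fun h₂ => hrt (Prod.ext hrt₁ h₂)
  exact Prod.ext (hpr₁.trans hrt₁) (by rw [Bool.eq_not.mpr hpr₂, Bool.eq_not.mpr hrt₂.symm])

theorem IsReduced.hasShortSquare_or_hasShortXYX {L : List (Fin 2 × Bool)} (hL : IsReduced L)
    (h6 : L.length = 6) : HasShortSquare L ∨ HasShortXYX L := by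
  match L, h6 with
  | [a, b, c, d, e, f], _ =>
  by_contra! ⟨hsq, hxyx⟩
  have hab : a ≠ b := fun h => hsq ⟨[], [a], [c, d, e, f], by simp, by simp, by simp [h]⟩
  have hbc : b ≠ c := fun h => hsq ⟨[a], [b], [d, e, f], by simp, by simp, by simp [h]⟩
  have hcd : c ≠ d := fun h => hsq ⟨[a, b], [c], [e, f], by simp, by simp, by simp [h]⟩
  have hde : d ≠ e := fun h => hsq ⟨[a, b, c], [d], [f], by simp, by simp, by simp [h]⟩
  have hef : e ≠ f := fun h => hsq ⟨[a, b, c, d], [e], [], by simp, by simp, by simp [h]⟩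
  have hac : a ≠ c := fun h =>
    hxyx ⟨[], [a], [b], [d, e, f], by simp, by simp, by simp, by simp, by simp [h]⟩
  have hbd : b ≠ d := fun h =>
    hxyx ⟨[a], [b], [c], [e, f], by simp, by simp, by simp, by simp, by simp [h]⟩
  have hce : c ≠ e := fun h =>
    hxyx ⟨[a, b], [c], [d], [f], by simp, by simp, by simp, by simp, by simp [h]⟩
  have hdf : d ≠ f := fun h =>
    hxyx ⟨[a, b, c], [d], [e], [], by simp, by simp, by simp, by simp, by simp [h]⟩
  have hae : a = e := (hL.infix ⟨[], [f], rfl⟩).eq_of_ne hab hbc hcd hde hac hce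
  have hbf : b = f := (hL.infix ⟨[a], [], rfl⟩).eq_of_ne hbc hcd hde hef hbd hdf
  exact hxyx ⟨[], [a, b], [c, d], [], by simp, by simp, by simp, by simp, by simp [hae, hbf]⟩

end FreeGroup

open FreeGroup in
/-- Every reduced word of length `6` in the free group on two generators contains a
subword of the form `α²` or `αβα`, where `α`, `β` are nontrivial elements of length at
most `2` and "subword" means a decomposition as a product whose word lengths add up. -/
theorem stmt_19 (w : FreeGroup (Fin 2)) (hw : w.norm = 6) :
    (∃ u α v : FreeGroup (Fin 2), 1 ≤ α.norm ∧ α.norm ≤ 2 ∧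
      w = u * (α * α) * v ∧ w.norm = u.norm + (α.norm + α.norm) + v.norm) ∨
    (∃ u α β v : FreeGroup (Fin 2), 1 ≤ α.norm ∧ α.norm ≤ 2 ∧
      1 ≤ β.norm ∧ β.norm ≤ 2 ∧
      w = u * (α * β * α) * v ∧
      w.norm = u.norm + (α.norm + β.norm + α.norm) + v.norm) := by
  have hred : IsReduced w.toWord := isReduced_toWord
  have hnorm (M) (hM : M <:+: w.toWord) : (mk M).norm = M.length := (hred.infix hM).norm_mk
  have hlen : w.norm = w.toWord.length := rfl
  rcases hred.hasShortSquare_or_hasShortXYX hw with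
    ⟨u, x, v, hx₁, hx₂, hL⟩ | ⟨u, x, y, v, hx₁, hx₂, hy₁, hy₂, hL⟩
  · have hu := hnorm u ⟨[], x ++ x ++ v, by simp [hL]⟩
    have hx := hnorm x ⟨u, x ++ v, by simp [hL]⟩
    have hv := hnorm v ⟨u ++ x ++ x, [], by simp [hL]⟩
    refine Or.inl ⟨mk u, mk x, mk v, by omega, by omega,
      by rw [← mk_toWord (x := w), hL]; simp only [mul_mk], ?_⟩
    rw [hlen, hL, hu, hx, hv]
    simp only [List.length_append]
  · have hu := hnorm u ⟨[], x ++ y ++ x ++ v, by simp [hL]⟩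
    have hx := hnorm x ⟨u, y ++ x ++ v, by simp [hL]⟩
    have hy := hnorm y ⟨u ++ x, x ++ v, by simp [hL]⟩
    have hv := hnorm v ⟨u ++ x ++ y ++ x, [], by simp [hL]⟩
    refine Or.inr ⟨mk u, mk x, mk y, mk v, by omega, by omega, by omega, by omega,
      by rw [← mk_toWord (x := w), hL]; simp only [mul_mk], ?_⟩
    rw [hlen, hL, hu, hx, hy, hv]
    simp only [List.length_append]
end
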